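/- arXiv:1809.03075 — 3 statements merged into one kernel-verified Lean document; each statement's English description precedes it below -/
import Mathlib

section
/- (One-step laminar regret decomposition, the inductive step of Theorem 1.) The cumulative subtree regret of the decision point decomposes exactly into the laminar loss terms at the decision point and the cumulative regrets of its children: R^T = Σ_{t=1}^T ℓ̂^t(x^t) − min_{x̂∈X} [ Σ_{t=1}^T ℓ̂^t(x̂) − Σ_{i∈C} x̂_{c(i)} R_i^T ]. -/
/-!
For a fixed `x̂ ∈ X`, the subtree loss is minimized over `ŷ` child by child: since the weights
`x̂_{c(i)}` are nonnegative, its minimum is `Σ_t ℓ^t(x̂) + Σ_i x̂_{c(i)} m_i`, where `m_i` is the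
minimum of child `i`'s cumulative loss. Minimizing a joint objective is minimizing this partial
minimum over `x̂`, and `Σ_t ℓ̂^t(x̂) - Σ_i x̂_{c(i)} R_i^T` is the same function of `x̂`: the
children's realized losses `Σ_t V_i^t(y_i^t)` cancel.
-/

open Finset

theorem sInf_image_prod_eq_sInf_image {α β γ : Type*} [ConditionallyCompleteLinearOrder γ]
    {X : Set α} {Y : Set β} {F : α × β → γ} {G : α → γ}
    (hG : ∀ x ∈ X, IsLeast ((fun y => F (x, y)) '' Y) (G x)) :
    sInf (F '' X ×ˢ Y) = sInf (G '' X) := by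
  apply csInf_eq_csInf_of_forall_exists_le
  · rintro _ ⟨⟨x, y⟩, ⟨hx, hy⟩, rfl⟩
    exact ⟨G x, Set.mem_image_of_mem G hx, (hG x hx).2 ⟨y, hy, rfl⟩⟩
  · rintro _ ⟨x, hx, rfl⟩
    obtain ⟨y, hy, hFG⟩ := (hG x hx).1
    exact ⟨F (x, y), Set.mem_image_of_mem F ⟨hx, hy⟩, hFG.le⟩

theorem isLeast_image_pi_sum_mul {R ι : Type*} [Semiring R] [PartialOrder R] [IsOrderedRing R]
    [Fintype ι] {β : ι → Type*} {K : ∀ i, Set (β i)} {f : ∀ i, β i → R} {m : ι → R}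
    {w : ι → R} (hw : ∀ i, 0 ≤ w i) (hm : ∀ i, IsLeast (f i '' K i) (m i)) :
    IsLeast ((fun y => ∑ i, w i * f i (y i)) '' Set.univ.pi K) (∑ i, w i * m i) := by
  choose yMin hyMin hfyMin using fun i => (hm i).1
  refine ⟨⟨yMin, fun i _ => hyMin i, by simp only [hfyMin]⟩, ?_⟩
  rintro _ ⟨y, hy, rfl⟩
  exact sum_le_sum fun i _ =>
    mul_le_mul_of_nonneg_left ((hm i).2 ⟨y i, hy i (Set.mem_univ i), rfl⟩) (hw i)

theorem sum_add_sum_mul_eq_sum_add_sum_mul_sum {R ι κ : Type*} [NonUnitalNonAssocSemiring R]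
    [Fintype ι] [Fintype κ] (a : ι → R) (w : κ → R) (b : ι → κ → R) :
    ∑ t, (a t + ∑ i, w i * b t i) = ∑ t, a t + ∑ i, w i * ∑ t, b t i := by
  simp only [sum_add_distrib, mul_sum]
  rw [sum_comm]

theorem laminar_regret_decomposition_general
    {n : ℕ} (X : Set (Fin n → ℝ))
    (hXnonneg : ∀ xh ∈ X, ∀ a : Fin n, 0 ≤ xh a)
    {C : Type*} [Fintype C] (c : C → Fin n)
    {E : C → Type*} [∀ i, NormedAddCommGroup (E i)]
    (K : ∀ i : C, Set (E i))
    (hKne : ∀ i, (K i).Nonempty) (hKcpt : ∀ i, IsCompact (K i))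
    {T : ℕ}
    (ℓ : Fin T → (Fin n → ℝ) → ℝ)
    (V : Fin T → ∀ i : C, E i → ℝ) (hV : ∀ t i, ContinuousOn (V t i) (K i))
    (x : Fin T → (Fin n → ℝ))
    (y : Fin T → ∀ i : C, E i)
    -- the cumulative subtree regret
    (R : ℝ)
    (hR : R = (∑ t, (ℓ t (x t) + ∑ i, x t (c i) * V t i (y t i))) -
      sInf ((fun p : (Fin n → ℝ) × (∀ i : C, E i) =>
          ∑ t, (ℓ t p.1 + ∑ i, p.1 (c i) * V t i (p.2 i))) ''
        (X ×ˢ Set.univ.pi K)))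
    -- the cumulative regret of each child
    (Rc : C → ℝ)
    (hRc : ∀ i, Rc i = (∑ t, V t i (y t i)) -
      sInf ((fun yh => ∑ t, V t i yh) '' K i))
    -- the laminar loss at the decision point
    (lhat : Fin T → (Fin n → ℝ) → ℝ)
    (hlhat : ∀ t xh, lhat t xh = ℓ t xh + ∑ i, xh (c i) * V t i (y t i)) :
    R = (∑ t, lhat t (x t)) -
      sInf ((fun xh => (∑ t, lhat t xh) - ∑ i, xh (c i) * Rc i) '' X) := by
  choose m hm using fun i => ((hKcpt i).image_of_continuousOn
    (continuousOn_finsetSum univ fun t _ => hV t i)).exists_isLeast ((hKne i).image _)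
  have hsubtree_min : ∀ xh ∈ X, IsLeast
      ((fun yh => ∑ t, (ℓ t xh + ∑ i, xh (c i) * V t i (yh i))) '' Set.univ.pi K)
      (∑ t, ℓ t xh + ∑ i, xh (c i) * m i) := by
    intro xh hxh
    simp only [sum_add_sum_mul_eq_sum_add_sum_mul_sum]
    rw [← Set.image_image (∑ t, ℓ t xh + ·)]
    exact (monotone_id.const_add _).map_isLeast
      (isLeast_image_pi_sum_mul (fun i => hXnonneg xh hxh (c i)) hm)
  have hreduced : (fun xh => (∑ t, lhat t xh) - ∑ i, xh (c i) * Rc i) =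
      fun xh => ∑ t, ℓ t xh + ∑ i, xh (c i) * m i := by
    funext xh
    simp only [hlhat, hRc, (hm _).csInf_eq, sum_add_sum_mul_eq_sum_add_sum_mul_sum, mul_sub,
      sum_sub_distrib]
    ring
  rw [hR, sInf_image_prod_eq_sInf_image hsubtree_min, hreduced]
  simp only [hlhat]

/-- One-step laminar regret decomposition (inductive step of Theorem 1):
    the cumulative subtree regret at a decision point decomposes exactly into
    the laminar loss terms at the decision point and the cumulative regrets of
    its children. -/
theorem laminar_regret_decomposition
    {n : ℕ} (X : Set (Fin n → ℝ))
    (hXne : X.Nonempty) (hXcpt : IsCompact X)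
    (hXnonneg : ∀ xh ∈ X, ∀ a : Fin n, 0 ≤ xh a)
    {C : Type*} [Fintype C] (c : C → Fin n)
    {E : C → Type*} [∀ i, NormedAddCommGroup (E i)] [∀ i, NormedSpace ℝ (E i)]
    [∀ i, FiniteDimensional ℝ (E i)]
    (K : ∀ i : C, Set (E i))
    (hKne : ∀ i, (K i).Nonempty) (hKcpt : ∀ i, IsCompact (K i))
    {T : ℕ}
    (ℓ : Fin T → (Fin n → ℝ) → ℝ) (hℓ : ∀ t, Continuous (ℓ t))
    (V : Fin T → ∀ i : C, E i → ℝ) (hV : ∀ t i, ContinuousOn (V t i) (K i))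
    (x : Fin T → (Fin n → ℝ)) (hx : ∀ t, x t ∈ X)
    (y : Fin T → ∀ i : C, E i) (hy : ∀ t i, y t i ∈ K i)
    -- the cumulative subtree regret
    (R : ℝ)
    (hR : R = (∑ t, (ℓ t (x t) + ∑ i, x t (c i) * V t i (y t i))) -
      sInf ((fun p : (Fin n → ℝ) × (∀ i : C, E i) =>
          ∑ t, (ℓ t p.1 + ∑ i, p.1 (c i) * V t i (p.2 i))) ''
        (X ×ˢ Set.univ.pi K)))
    -- the cumulative regret of each child
    (Rc : C → ℝ)
    (hRc : ∀ i, Rc i = (∑ t, V t i (y t i)) -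
      sInf ((fun yh => ∑ t, V t i yh) '' K i))
    -- the laminar loss at the decision point
    (lhat : Fin T → (Fin n → ℝ) → ℝ)
    (hlhat : ∀ t xh, lhat t xh = ℓ t xh + ∑ i, xh (c i) * V t i (y t i)) :
    R = (∑ t, lhat t (x t)) -
      sInf ((fun xh => (∑ t, lhat t xh) - ∑ i, xh (c i) * Rc i) '' X) :=
  laminar_regret_decomposition_general X hXnonneg c K hKne hKcpt ℓ V hV x y R hR Rc hRc lhat hlhat
end

section
/- (One-step version of Theorem 2.) The cumulative subtree regret is bounded by the laminar regret at the decision point plus the maximum, over strategies at the decision point, of the weighted sum of the children's cumulative regrets: R^T ≤ R̂^T + max_{x̂∈X} Σ_{i∈C} x̂_{c(i)} · R_i^T. -/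
/-!
Fix a joint strategy `(x̂, ŷ)`. Each child's realized cumulative loss is at most
`R_i^T + Σ_t V_i^t(ŷ_i)`, and the weights `x̂_{c(i)}` are nonnegative, so
`Σ_t ℓ̂^t(x̂) ≤ Σ_t L^t(x̂, ŷ) + Σ_i x̂_{c(i)} R_i^T`. Bound the left side below by its
minimum over `X`, the last term above by its maximum over `X`, and take the infimum
over `(x̂, ŷ)`.
-/

open Finset

theorem sum_add_weighted_sum_le {τ C : Type*} [Fintype τ] [Fintype C]
    (w : C → ℝ) (hw : ∀ i, 0 ≤ w i) (f : τ → ℝ) (v v' : τ → C → ℝ)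
    (r : C → ℝ) (hr : ∀ i, ∑ t, v t i ≤ r i + ∑ t, v' t i) :
    ∑ t, (f t + ∑ i, w i * v t i) ≤
      ∑ t, (f t + ∑ i, w i * v' t i) + ∑ i, w i * r i := by
  have hswap : ∀ u : τ → C → ℝ,
      ∑ t, (f t + ∑ i, w i * u t i) = ∑ t, f t + ∑ i, w i * ∑ t, u t i := by
    intro u
    rw [sum_add_distrib, sum_comm]
    simp only [mul_sum]
  rw [hswap, hswap, add_assoc, ← sum_add_distrib]
  gcongr with i
  rw [← mul_add, add_comm]
  exact mul_le_mul_of_nonneg_left (hr i) (hw i)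

theorem csInf_image_le_csInf_image_add_csSup_image {α β : Type*}
    {g h : α → ℝ} {F : β → ℝ} {X : Set α} {S : Set β}
    (hg : BddBelow (g '' X)) (hh : BddAbove (h '' X)) (hS : S.Nonempty)
    (hF : ∀ p ∈ S, ∃ x ∈ X, g x ≤ F p + h x) :
    sInf (g '' X) ≤ sInf (F '' S) + sSup (h '' X) := by
  rw [← sub_le_iff_le_add]
  refine le_csInf (hS.image F) ?_
  rintro _ ⟨p, hp, rfl⟩
  obtain ⟨x, hx, hgx⟩ := hF p hp
  linarith [csInf_le hg (Set.mem_image_of_mem g hx), le_csSup hh (Set.mem_image_of_mem h hx)]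

theorem laminar_regret_bound_general
    {n : ℕ} (X : Set (Fin n → ℝ))
    (hXne : X.Nonempty) (hXcpt : IsCompact X)
    (hXnonneg : ∀ xh ∈ X, ∀ a : Fin n, 0 ≤ xh a)
    {C : Type*} [Fintype C] (c : C → Fin n)
    {E : C → Type*} [∀ i, NormedAddCommGroup (E i)]
    (K : ∀ i : C, Set (E i))
    (hKne : ∀ i, (K i).Nonempty) (hKcpt : ∀ i, IsCompact (K i))
    {T : ℕ}
    (ℓ : Fin T → (Fin n → ℝ) → ℝ) (hℓ : ∀ t, Continuous (ℓ t))
    (V : Fin T → ∀ i : C, E i → ℝ) (hV : ∀ t i, ContinuousOn (V t i) (K i))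
    (x : Fin T → (Fin n → ℝ))
    (y : Fin T → ∀ i : C, E i)
    -- the cumulative subtree regret
    (R : ℝ)
    (hR : R = (∑ t, (ℓ t (x t) + ∑ i, x t (c i) * V t i (y t i))) -
      sInf ((fun p : (Fin n → ℝ) × (∀ i : C, E i) =>
          ∑ t, (ℓ t p.1 + ∑ i, p.1 (c i) * V t i (p.2 i))) ''
        (X ×ˢ Set.univ.pi K)))
    -- the cumulative regret of each child
    (Rc : C → ℝ)
    (hRc : ∀ i, Rc i = (∑ t, V t i (y t i)) -
      sInf ((fun yh => ∑ t, V t i yh) '' K i))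
    -- the laminar loss at the decision point
    (lhat : Fin T → (Fin n → ℝ) → ℝ)
    (hlhat : ∀ t xh, lhat t xh = ℓ t xh + ∑ i, xh (c i) * V t i (y t i))
    -- the laminar regret at the decision point
    (Rhat : ℝ)
    (hRhat : Rhat = (∑ t, lhat t (x t)) -
      sInf ((fun xh => ∑ t, lhat t xh) '' X)) :
    R ≤ Rhat + sSup ((fun xh => ∑ i, xh (c i) * Rc i) '' X) := by
  obtain rfl : lhat = _ := funext fun t => funext (hlhat t)
  subst hR hRhat
  have hchild : ∀ i, ∀ yh ∈ K i, ∑ t, V t i (y t i) ≤ Rc i + ∑ t, V t i yh := by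
    intro i yh hyh
    have hbdd := (hKcpt i).bddBelow_image (continuousOn_finsetSum univ fun t _ => hV t i)
    linarith [hRc i, csInf_le hbdd (Set.mem_image_of_mem _ hyh)]
  have key := csInf_image_le_csInf_image_add_csSup_image
    (g := fun xh => ∑ t, (ℓ t xh + ∑ i, xh (c i) * V t i (y t i)))
    (h := fun xh => ∑ i, xh (c i) * Rc i)
    (F := fun p : (Fin n → ℝ) × (∀ i : C, E i) =>
      ∑ t, (ℓ t p.1 + ∑ i, p.1 (c i) * V t i (p.2 i)))
    (hXcpt.bddBelow_image (by fun_prop)) (hXcpt.bddAbove_image (by fun_prop))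
    (hXne.prod (Set.univ_pi_nonempty_iff.mpr hKne))
    fun p hp => ⟨p.1, hp.1, sum_add_weighted_sum_le _ (fun i => hXnonneg p.1 hp.1 (c i))
      _ _ _ _ fun i => hchild i (p.2 i) (hp.2 i (Set.mem_univ i))⟩
  linarith

/-- One-step version of Theorem 2: the cumulative subtree regret is bounded by
    the laminar regret at the decision point plus the maximum, over strategies
    at the decision point, of the weighted sum of the children's cumulative
    regrets. -/
theorem laminar_regret_bound
    {n : ℕ} (X : Set (Fin n → ℝ))
    (hXne : X.Nonempty) (hXcpt : IsCompact X)
    (hXnonneg : ∀ xh ∈ X, ∀ a : Fin n, 0 ≤ xh a)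
    {C : Type*} [Fintype C] (c : C → Fin n)
    {E : C → Type*} [∀ i, NormedAddCommGroup (E i)] [∀ i, NormedSpace ℝ (E i)]
    [∀ i, FiniteDimensional ℝ (E i)]
    (K : ∀ i : C, Set (E i))
    (hKne : ∀ i, (K i).Nonempty) (hKcpt : ∀ i, IsCompact (K i))
    {T : ℕ}
    (ℓ : Fin T → (Fin n → ℝ) → ℝ) (hℓ : ∀ t, Continuous (ℓ t))
    (V : Fin T → ∀ i : C, E i → ℝ) (hV : ∀ t i, ContinuousOn (V t i) (K i))
    (x : Fin T → (Fin n → ℝ)) (hx : ∀ t, x t ∈ X)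
    (y : Fin T → ∀ i : C, E i) (hy : ∀ t i, y t i ∈ K i)
    -- the cumulative subtree regret
    (R : ℝ)
    (hR : R = (∑ t, (ℓ t (x t) + ∑ i, x t (c i) * V t i (y t i))) -
      sInf ((fun p : (Fin n → ℝ) × (∀ i : C, E i) =>
          ∑ t, (ℓ t p.1 + ∑ i, p.1 (c i) * V t i (p.2 i))) ''
        (X ×ˢ Set.univ.pi K)))
    -- the cumulative regret of each child
    (Rc : C → ℝ)
    (hRc : ∀ i, Rc i = (∑ t, V t i (y t i)) -
      sInf ((fun yh => ∑ t, V t i yh) '' K i))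
    -- the laminar loss at the decision point
    (lhat : Fin T → (Fin n → ℝ) → ℝ)
    (hlhat : ∀ t xh, lhat t xh = ℓ t xh + ∑ i, xh (c i) * V t i (y t i))
    -- the laminar regret at the decision point
    (Rhat : ℝ)
    (hRhat : Rhat = (∑ t, lhat t (x t)) -
      sInf ((fun xh => ∑ t, lhat t xh) '' X)) :
    R ≤ Rhat + sSup ((fun xh => ∑ i, xh (c i) * Rc i) '' X) :=
  laminar_regret_bound_general X hXne hXcpt hXnonneg c K hKne hKcpt ℓ hℓ V hV x y R hR Rc hRc lhat
    hlhat Rhat hRhat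
end

section
/- (Two-level version of the Corollary to Theorem 2.) If the laminar regret at the decision point grows sublinearly, i.e., R̂^T / T → 0 as T → ∞, and for every child i ∈ C the cumulative child regret grows sublinearly, i.e., R_i^T / T → 0 as T → ∞, then the cumulative subtree regret grows sublinearly: R^T / T → 0 as T → ∞. -/
/-!
Fixing every child at a minimizer `y⋆ᵢ` of its cumulative loss is optimal for each `x̂ ≥ 0`
simultaneously, so the best subtree loss in hindsight is the best laminar loss in hindsight with
each child's cumulative loss `sᵢ = ∑ₜ Vᵢᵗ(yᵢᵗ)` replaced by its minimum `mᵢ`. On `X` the two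
hindsight objectives differ by `∑ᵢ x̂_{c(i)} Rᵢᵀ`, at most `M ∑ᵢ |Rᵢᵀ|` for a bound `M` on `X`,
while the incurred losses coincide; hence `|Rᵀ - R̂ᵀ| ≤ M ∑ᵢ |Rᵢᵀ| = o(T)`.
-/

open Finset Filter Topology

section Infimum

variable {α β : Type*}

theorem sInf_image_le_sInf_image_add {S : Set α} {f g : α → ℝ} {D : ℝ} (hS : S.Nonempty)
    (hf : BddBelow (f '' S)) (hfg : ∀ a ∈ S, f a ≤ g a + D) :
    sInf (f '' S) ≤ sInf (g '' S) + D := by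
  rw [← sub_le_iff_le_add]
  refine le_csInf (hS.image g) ?_
  rintro _ ⟨a, ha, rfl⟩
  linarith [csInf_le hf ⟨a, ha, rfl⟩, hfg a ha]

theorem abs_sInf_image_sub_sInf_image_le {S : Set α} {f g : α → ℝ} {D : ℝ} (hS : S.Nonempty)
    (hf : BddBelow (f '' S)) (hg : BddBelow (g '' S)) (hfg : ∀ a ∈ S, |f a - g a| ≤ D) :
    |sInf (f '' S) - sInf (g '' S)| ≤ D := by
  refine abs_sub_le_iff.2 ⟨?_, ?_⟩
  · linarith [sInf_image_le_sInf_image_add (g := g) (D := D) hS hf fun a ha =>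
      by linarith [(abs_le.1 (hfg a ha)).2]]
  · linarith [sInf_image_le_sInf_image_add (g := f) (D := D) hS hg fun a ha =>
      by linarith [(abs_le.1 (hfg a ha)).1]]

theorem sInf_image_prod_eq_of_le {S : Set α} {Y : Set β} {F : α × β → ℝ} {b₀ : β} (hb₀ : b₀ ∈ Y)
    (hF : ∀ a ∈ S, ∀ b ∈ Y, F (a, b₀) ≤ F (a, b)) :
    sInf (F '' S ×ˢ Y) = sInf ((fun a => F (a, b₀)) '' S) := by
  refine csInf_eq_csInf_of_forall_exists_le ?_ ?_
  · rintro _ ⟨⟨a, b⟩, ⟨ha, hb⟩, rfl⟩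
    exact ⟨_, ⟨a, ha, rfl⟩, hF a ha b hb⟩
  · rintro _ ⟨a, ha, rfl⟩
    exact ⟨_, ⟨(a, b₀), ⟨ha, hb₀⟩, rfl⟩, le_rfl⟩

end Infimum

theorem sum_add_sum_mul_eq {τ ι : Type*} [Fintype ι] (s : Finset τ) (a : τ → ℝ) (w : ι → ℝ)
    (b : τ → ι → ℝ) :
    ∑ t ∈ s, (a t + ∑ i, w i * b t i) = ∑ t ∈ s, a t + ∑ i, w i * ∑ t ∈ s, b t i := by
  simp only [sum_add_distrib, mul_sum]
  rw [sum_comm]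

section Laminar

variable {A ι : Type*} [Fintype ι] {E : ι → Type*} [∀ i, TopologicalSpace (E i)]
  {X : Set (A → ℝ)} (c : ι → A) {K : ∀ i, Set (E i)} (L : (A → ℝ) → ℝ) {Φ : ∀ i, E i → ℝ}

theorem sInf_subtree_eq_sInf_laminar_childMin (hXnonneg : ∀ xh ∈ X, ∀ a, 0 ≤ xh a)
    (hKne : ∀ i, (K i).Nonempty) (hKcpt : ∀ i, IsCompact (K i))
    (hΦ : ∀ i, ContinuousOn (Φ i) (K i)) :
    sInf ((fun p : (A → ℝ) × (∀ i, E i) => L p.1 + ∑ i, p.1 (c i) * Φ i (p.2 i)) ''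
        X ×ˢ Set.univ.pi K) =
      sInf ((fun xh => L xh + ∑ i, xh (c i) * sInf (Φ i '' K i)) '' X) := by
  have hbdd i : BddBelow (Φ i '' K i) := ((hKcpt i).image_of_continuousOn (hΦ i)).bddBelow
  choose ymin hymin hyminΦ using fun i =>
    ((hKcpt i).image_of_continuousOn (hΦ i)).sInf_mem ((hKne i).image (Φ i))
  rw [sInf_image_prod_eq_of_le (Set.mem_univ_pi.2 hymin)]
  · simp only [hyminΦ]
  · rintro xh hxh yh hyh
    gcongr with i
    · exact hXnonneg xh hxh (c i)
    · rw [hyminΦ]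
      exact csInf_le (hbdd i) ⟨yh i, hyh i trivial, rfl⟩

theorem abs_sInf_laminar_sub_sInf_subtree_le [Fintype A] (hXne : X.Nonempty)
    (hXcpt : IsCompact X) (hXnonneg : ∀ xh ∈ X, ∀ a, 0 ≤ xh a)
    (hKne : ∀ i, (K i).Nonempty) (hKcpt : ∀ i, IsCompact (K i)) (hL : Continuous L)
    (hΦ : ∀ i, ContinuousOn (Φ i) (K i)) (s : ι → ℝ) {M : ℝ} (hM : ∀ xh ∈ X, ‖xh‖ ≤ M) :
    |sInf ((fun xh => L xh + ∑ i, xh (c i) * s i) '' X) -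
        sInf ((fun p : (A → ℝ) × (∀ i, E i) => L p.1 + ∑ i, p.1 (c i) * Φ i (p.2 i)) ''
          X ×ˢ Set.univ.pi K)| ≤
      M * ∑ i, |s i - sInf (Φ i '' K i)| := by
  rw [sInf_subtree_eq_sInf_laminar_childMin c L hXnonneg hKne hKcpt hΦ]
  refine abs_sInf_image_sub_sInf_image_le hXne (hXcpt.image (by fun_prop)).bddBelow
    (hXcpt.image (by fun_prop)).bddBelow fun xh hxh => ?_
  calc |L xh + ∑ i, xh (c i) * s i - (L xh + ∑ i, xh (c i) * sInf (Φ i '' K i))|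
      = |∑ i, xh (c i) * (s i - sInf (Φ i '' K i))| := by
        simp only [add_sub_add_left_eq_sub, ← sum_sub_distrib, mul_sub]
    _ ≤ ∑ i, |xh (c i)| * |s i - sInf (Φ i '' K i)| := by
        simpa only [abs_mul] using
          abs_sum_le_sum_abs (fun i => xh (c i) * (s i - sInf (Φ i '' K i))) univ
    _ ≤ M * ∑ i, |s i - sInf (Φ i '' K i)| := by
        rw [mul_sum]
        gcongr with i
        exact (norm_le_pi_norm xh (c i)).trans (hM xh hxh)

end Laminar

theorem tendsto_div_of_abs_sub_le_sum {τ ι : Type*} [Fintype ι] {l : Filter τ} {a b d : τ → ℝ}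
    {r : ι → τ → ℝ} {M : ℝ} (ha : Tendsto (fun T => a T / d T) l (𝓝 0))
    (hr : ∀ i, Tendsto (fun T => r i T / d T) l (𝓝 0))
    (hab : ∀ T, |b T - a T| ≤ M * ∑ i, |r i T|) :
    Tendsto (fun T => b T / d T) l (𝓝 0) := by
  have hbound : Tendsto (fun T => M * ∑ i, |r i T / d T|) l (𝓝 0) := by
    simpa using (tendsto_finsetSum univ fun i _ => (hr i).abs).const_mul M
  have hdiff : Tendsto (fun T => (b T - a T) / d T) l (𝓝 0) := by
    refine squeeze_zero_norm (fun T => ?_) hbound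
    simp only [Real.norm_eq_abs, abs_div, ← sum_div, ← mul_div_assoc]
    gcongr
    exact hab T
  simpa [← add_div] using ha.add hdiff

theorem laminar_regret_sublinear_general
    {n : ℕ} (X : Set (Fin n → ℝ))
    (hXne : X.Nonempty) (hXcpt : IsCompact X)
    (hXnonneg : ∀ xh ∈ X, ∀ a : Fin n, 0 ≤ xh a)
    {C : Type*} [Fintype C] (c : C → Fin n)
    {E : C → Type*} [∀ i, NormedAddCommGroup (E i)]
    (K : ∀ i : C, Set (E i))
    (hKne : ∀ i, (K i).Nonempty) (hKcpt : ∀ i, IsCompact (K i))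
    (ℓ : ℕ → (Fin n → ℝ) → ℝ) (hℓ : ∀ t, Continuous (ℓ t))
    (V : ℕ → ∀ i : C, E i → ℝ) (hV : ∀ t i, ContinuousOn (V t i) (K i))
    (x : ℕ → (Fin n → ℝ))
    (y : ℕ → ∀ i : C, E i)
    -- the cumulative subtree regret up to time `T`
    (R : ℕ → ℝ)
    (hR : ∀ T, R T =
      (∑ t ∈ range T, (ℓ t (x t) + ∑ i, x t (c i) * V t i (y t i))) -
      sInf ((fun p : (Fin n → ℝ) × (∀ i : C, E i) =>
          ∑ t ∈ range T, (ℓ t p.1 + ∑ i, p.1 (c i) * V t i (p.2 i))) ''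
        (X ×ˢ Set.univ.pi K)))
    -- the cumulative regret of each child up to time `T`
    (Rc : C → ℕ → ℝ)
    (hRc : ∀ i T, Rc i T = (∑ t ∈ range T, V t i (y t i)) -
      sInf ((fun yh => ∑ t ∈ range T, V t i yh) '' K i))
    -- the laminar loss at the decision point
    (lhat : ℕ → (Fin n → ℝ) → ℝ)
    (hlhat : ∀ t xh, lhat t xh = ℓ t xh + ∑ i, xh (c i) * V t i (y t i))
    -- the laminar regret at the decision point up to time `T`
    (Rhat : ℕ → ℝ)
    (hRhat : ∀ T, Rhat T = (∑ t ∈ range T, lhat t (x t)) -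
      sInf ((fun xh => ∑ t ∈ range T, lhat t xh) '' X))
    -- sublinear growth of the laminar regret and of the children's regrets
    (hRhat_sub : Tendsto (fun T : ℕ => Rhat T / T) atTop (nhds 0))
    (hRc_sub : ∀ i, Tendsto (fun T : ℕ => Rc i T / T) atTop (nhds 0)) :
    Tendsto (fun T : ℕ => R T / T) atTop (nhds 0) := by
  obtain ⟨M, -, hM⟩ := hXcpt.isBounded.exists_pos_norm_le
  refine tendsto_div_of_abs_sub_le_sum (M := M) hRhat_sub hRc_sub fun T => ?_
  rw [hR, hRhat]
  simp only [hRc, hlhat, sum_add_sum_mul_eq, sub_sub_sub_cancel_left]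
  exact abs_sInf_laminar_sub_sInf_subtree_le c (fun xh => ∑ t ∈ range T, ℓ t xh) hXne hXcpt
    hXnonneg hKne hKcpt (continuous_finsetSum _ fun t _ => hℓ t)
    (fun i => continuousOn_finsetSum _ fun t _ => hV t i) _ hM

/-- Two-level version of the Corollary to Theorem 2: if the laminar regret at
    the decision point and the cumulative regrets of all children grow
    sublinearly, then the cumulative subtree regret grows sublinearly. -/
theorem laminar_regret_sublinear
    {n : ℕ} (X : Set (Fin n → ℝ))
    (hXne : X.Nonempty) (hXcpt : IsCompact X)
    (hXnonneg : ∀ xh ∈ X, ∀ a : Fin n, 0 ≤ xh a)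
    {C : Type*} [Fintype C] (c : C → Fin n)
    {E : C → Type*} [∀ i, NormedAddCommGroup (E i)] [∀ i, NormedSpace ℝ (E i)]
    [∀ i, FiniteDimensional ℝ (E i)]
    (K : ∀ i : C, Set (E i))
    (hKne : ∀ i, (K i).Nonempty) (hKcpt : ∀ i, IsCompact (K i))
    (ℓ : ℕ → (Fin n → ℝ) → ℝ) (hℓ : ∀ t, Continuous (ℓ t))
    (V : ℕ → ∀ i : C, E i → ℝ) (hV : ∀ t i, ContinuousOn (V t i) (K i))
    (x : ℕ → (Fin n → ℝ)) (hx : ∀ t, x t ∈ X)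
    (y : ℕ → ∀ i : C, E i) (hy : ∀ t i, y t i ∈ K i)
    -- the cumulative subtree regret up to time `T`
    (R : ℕ → ℝ)
    (hR : ∀ T, R T =
      (∑ t ∈ range T, (ℓ t (x t) + ∑ i, x t (c i) * V t i (y t i))) -
      sInf ((fun p : (Fin n → ℝ) × (∀ i : C, E i) =>
          ∑ t ∈ range T, (ℓ t p.1 + ∑ i, p.1 (c i) * V t i (p.2 i))) ''
        (X ×ˢ Set.univ.pi K)))
    -- the cumulative regret of each child up to time `T`
    (Rc : C → ℕ → ℝ)
    (hRc : ∀ i T, Rc i T = (∑ t ∈ range T, V t i (y t i)) -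
      sInf ((fun yh => ∑ t ∈ range T, V t i yh) '' K i))
    -- the laminar loss at the decision point
    (lhat : ℕ → (Fin n → ℝ) → ℝ)
    (hlhat : ∀ t xh, lhat t xh = ℓ t xh + ∑ i, xh (c i) * V t i (y t i))
    -- the laminar regret at the decision point up to time `T`
    (Rhat : ℕ → ℝ)
    (hRhat : ∀ T, Rhat T = (∑ t ∈ range T, lhat t (x t)) -
      sInf ((fun xh => ∑ t ∈ range T, lhat t xh) '' X))
    -- sublinear growth of the laminar regret and of the children's regrets
    (hRhat_sub : Tendsto (fun T : ℕ => Rhat T / T) atTop (nhds 0))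
    (hRc_sub : ∀ i, Tendsto (fun T : ℕ => Rc i T / T) atTop (nhds 0)) :
    Tendsto (fun T : ℕ => R T / T) atTop (nhds 0) :=
  laminar_regret_sublinear_general X hXne hXcpt hXnonneg c K hKne hKcpt ℓ hℓ V hV x y R hR Rc hRc
    lhat hlhat Rhat hRhat hRhat_sub hRc_sub
end
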